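/- arXiv:1711.06487 — 7 statements merged into one kernel-verified Lean document; each statement's English description precedes it below -/
import Mathlib

section
/- Let G be a finite directed graph with a feedback vertex set V_τ = {1,2,3} of minimum size 3 (so τ(G) = 3). Suppose for some pair of distinct vertices i, j ∈ {1,2,3}, G has no directed cycle whose intersection with {1,2,3} is exactly {i, j}, and suppose there is a vertex w outside {1,2,3} lying on every directed cycle of G that meets {1,2,3} in exactly one vertex. Then removing {w, k}, where k is the third element of {1,2,3}, makes G acyclic, contradicting τ = 3. Hence if τ(G) = 3 and such a common vertex w exists, then for every pair of distinct i, j ∈ {1,2,3} there exists a directed cycle in G passing through i and j and through no other vertex of {1,2,3}. -/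
def IsDiCycle {V : Type*} (A : V → V → Prop) (c : List V) : Prop :=
  c ≠ [] ∧ c.Nodup ∧ c.Chain' A ∧ ∀ x ∈ c.getLast?, ∀ y ∈ c.head?, A x y

/-- Removing the vertex set `S` from the digraph makes it acyclic. -/
def IsFVS {V : Type*} (A : V → V → Prop) (S : Finset V) : Prop :=
  ∀ c : List V, IsDiCycle A c → ∃ x ∈ c, x ∈ S

/-- If `G` has a minimum feedback vertex set `{v₁, v₂, v₃}` of size `3` (so `τ(G) = 3`)
and there is a vertex `w ∉ {v₁, v₂, v₃}` lying on every unicycle (directed cycle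
meeting `{v₁, v₂, v₃}` in exactly one vertex), then for every pair of distinct
`i, j ∈ {v₁, v₂, v₃}` there is a directed cycle passing through `i` and `j` and
through no other vertex of `{v₁, v₂, v₃}`. -/
theorem bicycles_exist_of_common_unicycle_vertex {V : Type*} [Fintype V] [DecidableEq V]
    (A : V → V → Prop) (v₁ v₂ v₃ : V)
    (hdist : v₁ ≠ v₂ ∧ v₁ ≠ v₃ ∧ v₂ ≠ v₃)
    (hfvs : IsFVS A {v₁, v₂, v₃})
    (hmin : ∀ S : Finset V, IsFVS A S → 3 ≤ S.card)
    (w : V) (hw : w ∉ ({v₁, v₂, v₃} : Finset V))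
    (hwuni : ∀ c : List V, IsDiCycle A c →
      (∃ i ∈ ({v₁, v₂, v₃} : Finset V), i ∈ c ∧
        ∀ x ∈ ({v₁, v₂, v₃} : Finset V), x ∈ c → x = i) → w ∈ c) :
    ∀ i ∈ ({v₁, v₂, v₃} : Finset V), ∀ j ∈ ({v₁, v₂, v₃} : Finset V), i ≠ j →
      ∃ c : List V, IsDiCycle A c ∧ i ∈ c ∧ j ∈ c ∧
        ∀ x ∈ ({v₁, v₂, v₃} : Finset V), x ∈ c → x = i ∨ x = j := by
  intro i hi j hj hij
  by_contra hno
  obtain ⟨d12, d13, d23⟩ := hdist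
  -- pick the third vertex k
  have hk : ∃ k ∈ ({v₁, v₂, v₃} : Finset V), k ≠ i ∧ k ≠ j := by
    simp only [Finset.mem_insert, Finset.mem_singleton] at hi hj ⊢
    rcases hi with rfl | rfl | rfl <;> rcases hj with rfl | rfl | rfl <;>
      first
        | exact absurd rfl hij
        | exact ⟨v₁, by tauto, by tauto, by tauto⟩
        | exact ⟨v₂, by tauto, by tauto, by tauto⟩
        | exact ⟨v₃, by tauto, by tauto, by tauto⟩
  obtain ⟨k, hkT, hki, hkj⟩ := hk
  -- {v₁,v₂,v₃} = {i,j,k}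
  have hsub : ({i, j, k} : Finset V) ⊆ {v₁, v₂, v₃} := by
    intro y hy
    simp only [Finset.mem_insert, Finset.mem_singleton] at hy
    rcases hy with rfl | rfl | rfl <;> assumption
  have hcard3 : ({i, j, k} : Finset V).card = 3 := by
    rw [Finset.card_insert_of_notMem, Finset.card_insert_of_notMem,
      Finset.card_singleton]
    · simp [Ne.symm hkj]
    · simp only [Finset.mem_insert, Finset.mem_singleton]
      push_neg
      exact ⟨hij, Ne.symm hki⟩
  have hTcard : ({v₁, v₂, v₃} : Finset V).card ≤ 3 := by
    have h1 := Finset.card_insert_le v₁ ({v₂, v₃} : Finset V)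
    have h2 := Finset.card_insert_le v₂ ({v₃} : Finset V)
    simp only [Finset.card_singleton] at h2
    omega
  have hTeq : ({v₁, v₂, v₃} : Finset V) = {i, j, k} :=
    (Finset.eq_of_subset_of_card_le hsub (by rw [hcard3]; exact hTcard)).symm
  have hcover : ∀ y ∈ ({v₁, v₂, v₃} : Finset V), y = i ∨ y = j ∨ y = k := by
    intro y hy
    rw [hTeq] at hy
    simpa using hy
  -- {w, k} is a feedback vertex set
  have hfvs2 : IsFVS A {w, k} := by
    intro c hc
    by_cases hkc : k ∈ c
    · exact ⟨k, hkc, by simp⟩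
    · have hw' : w ∈ c := by
        obtain ⟨x, hxc, hxT⟩ := hfvs c hc
        have hall : ∀ y ∈ ({v₁, v₂, v₃} : Finset V), y ∈ c → y = i ∨ y = j := by
          intro y hyT hyc
          rcases hcover y hyT with h | h | h
          · exact Or.inl h
          · exact Or.inr h
          · exact absurd (h ▸ hyc) hkc
        by_cases hic : i ∈ c
        · by_cases hjc : j ∈ c
          · exact absurd ⟨c, hc, hic, hjc, hall⟩ hno
          · refine hwuni c hc ⟨i, hi, hic, ?_⟩
            intro y hyT hyc
            rcases hall y hyT hyc with h | h
            · exact h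
            · exact absurd (h ▸ hyc) hjc
        · refine hwuni c hc ⟨j, hj, ?_, ?_⟩
          · rcases hall x hxT hxc with h | h
            · exact absurd (h ▸ hxc) hic
            · exact h ▸ hxc
          · intro y hyT hyc
            rcases hall y hyT hyc with h | h
            · exact absurd (h ▸ hyc) hic
            · exact h
      exact ⟨w, hw', by simp⟩
  have hwk : w ≠ k := fun h => hw (h ▸ hkT)
  have hcard2 : ({w, k} : Finset V).card = 2 := by
    rw [Finset.card_insert_of_notMem (by simpa using hwk), Finset.card_singleton]
  have := hmin {w, k} hfvs2
  omega
end

section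
/- Let G be a finite directed graph in which every directed cycle passes through at least one vertex of a fixed set V_τ, and construct the directed graph G_NC as follows: for every vertex v of G create vertices v and v' with an edge (v, v'); for every edge (u, w) of G with w ∉ V_τ create an edge (u', w); for every w ∈ V_τ create vertices D_w, D_{w'} with edge (D_w, D_{w'}), and for every edge (u, w) of G with w ∈ V_τ create an edge (u', D_w). Then G_NC is acyclic. -/
/-- Vertices of the network `G_NC` obtained from a digraph `G` by vertex splitting:
`orig v` is the undashed copy `v`, `dash v` is the dashed copy `v'`, and `D w`,
`D' w` are the sink nodes `D_w`, `D_{w'}` (used for `w ∈ V_τ`). -/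
inductive NCVert (V : Type*) where
  | orig : V → NCVert V
  | dash : V → NCVert V
  | D : V → NCVert V
  | D' : V → NCVert V

/-- Adjacency of `G_NC`: an edge `(v, v')` for each vertex `v` of `G`; an edge
`(u', w)` for each edge `(u, w)` of `G` with `w ∉ V_τ`; an edge `(D_w, D_{w'})` for
each `w ∈ V_τ`; and an edge `(u', D_w)` for each edge `(u, w)` of `G` with `w ∈ V_τ`. -/
def NCAdj {V : Type*} (A : V → V → Prop) (Vτ : Set V) : NCVert V → NCVert V → Prop
  | .orig u, .dash v => u = v
  | .dash u, .orig w => A u w ∧ w ∉ Vτ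
  | .dash u, .D w => A u w ∧ w ∈ Vτ
  | .D u, .D' w => u = w ∧ w ∈ Vτ
  | _, _ => False

/-!
A directed cycle of `G_NC` never visits the vertices `D_w`, `D_{w'}`: `D_{w'}` is a sink and
`D_w` only leads to it. So the cycle alternates `v → v' → w → w' → ⋯`, and every step `v' → w`
is an edge of `G` whose head lies outside `V_τ`. Its undashed vertices thus form a closed walk in
`G` along such edges; shortcutting repeated vertices turns it into a directed cycle of `G`
avoiding `V_τ`, which contradicts the hypothesis.
-/

open Relation

section Cycles

variable {α : Type*} {R : α → α → Prop} {c : List α}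

lemma IsDiCycle.mono {S : α → α → Prop} (hRS : ∀ a b, R a b → S a b) (hc : IsDiCycle R c) :
    IsDiCycle S c :=
  ⟨hc.1, hc.2.1, hc.2.2.1.imp fun a b => hRS a b, fun x hx y hy => hRS _ _ (hc.2.2.2 x hx y hy)⟩

lemma IsDiCycle.succ_mem (hc : IsDiCycle R c) {x : α} (hx : x ∈ c) : ∃ y ∈ c, R x y := by
  obtain ⟨hne, -, hchain, hwrap⟩ := hc
  obtain ⟨s, t, rfl⟩ := List.append_of_mem hx
  cases t with
  | nil => exact ⟨_, List.head_mem hne, hwrap x (by simp) _ (List.head?_eq_some_head hne)⟩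
  | cons y t => exact ⟨y, by simp, (List.isChain_cons_cons.mp hchain.right_of_append).1⟩

lemma IsDiCycle.transGen_self (hc : IsDiCycle R c) {x : α} (hx : x ∈ c) : TransGen R x x := by
  obtain ⟨hne, -, hchain, hwrap⟩ := hc
  obtain ⟨s, t, rfl⟩ := List.append_of_mem hx
  have hlast : ReflTransGen R x ((s ++ x :: t).getLast hne) := by
    rw [List.getLast_append_right (List.cons_ne_nil x t)]
    exact List.relationReflTransGen_of_exists_isChain_cons t hchain.right_of_append rfl
  have hhead : ReflTransGen R ((s ++ x :: t).head hne) x := by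
    rw [← List.singleton_append, ← List.append_assoc] at hchain
    have := List.relationReflTransGen_of_exists_isChain _ hchain.left_of_append (by simp)
    cases s <;> simpa using this
  exact (TransGen.tail' hlast (hwrap _ (List.getLast?_eq_some_getLast hne) _
    (List.head?_eq_some_head hne))).trans_left hhead

lemma exists_nodup_isChain_of_reflTransGen {a b : α} (h : ReflTransGen R a b) :
    ∃ l, (a :: l).IsChain R ∧ (a :: l).Nodup ∧ (a :: l).getLast? = some b := by
  refine ReflTransGen.head_induction_on h ⟨[], .singleton b, List.nodup_singleton b, rfl⟩ ?_
  rintro x y hxy - ⟨l, hchain, hnodup, hlast⟩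
  by_cases hmem : x ∈ y :: l
  · obtain ⟨s, t, hst⟩ := List.append_of_mem hmem
    rw [hst] at hchain hnodup hlast
    refine ⟨t, hchain.right_of_append, hnodup.of_append_right, ?_⟩
    rwa [List.getLast?_append_of_ne_nil _ (List.cons_ne_nil x t)] at hlast
  · exact ⟨y :: l, hchain.cons_cons hxy, List.nodup_cons.mpr ⟨hmem, hnodup⟩,
      by rwa [List.getLast?_cons_cons]⟩

lemma exists_isDiCycle_of_transGen {a : α} (h : TransGen R a a) : ∃ c, IsDiCycle R c := by
  obtain ⟨b, hab, hba⟩ := TransGen.head'_iff.mp h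
  obtain ⟨l, hchain, hnodup, hlast⟩ := exists_nodup_isChain_of_reflTransGen hba
  refine ⟨b :: l, List.cons_ne_nil b l, hnodup, hchain, ?_⟩
  rw [hlast]
  rintro x ⟨⟩ y ⟨⟩
  exact hab

end Cycles

section SplitNetwork

variable {V : Type*} {A : V → V → Prop} {Vτ : Set V}

lemma transGen_ncAdj_orig {u : V} {y : NCVert V} (h : TransGen (NCAdj A Vτ) (.orig u) y) :
    (∀ v, y = .orig v → TransGen (fun a b => A a b ∧ b ∉ Vτ) u v) ∧
      (∀ v, y = .dash v → ReflTransGen (fun a b => A a b ∧ b ∉ Vτ) u v) := by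
  induction h with
  | @single y hy =>
    cases y <;> simp_all [NCAdj]
    case dash => exact hy ▸ ReflTransGen.refl
  | @tail y z _ hyz ih =>
    cases y <;> cases z <;> simp_all [NCAdj]
    case orig.dash => exact ih.to_reflTransGen
    case dash.orig => exact TransGen.tail' ih hyz

lemma IsDiCycle.exists_orig_mem {c : List (NCVert V)} (hc : IsDiCycle (NCAdj A Vτ) c) :
    ∃ u, NCVert.orig u ∈ c := by
  have hD' (w : V) : NCVert.D' w ∉ c := fun hw => by
    obtain ⟨y, -, hy⟩ := hc.succ_mem hw
    cases y <;> exact hy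
  have hD (w : V) : NCVert.D w ∉ c := fun hw => by
    obtain ⟨y, hyc, hy⟩ := hc.succ_mem hw
    cases y <;> simp only [NCAdj] at hy
    exact hD' _ hyc
  obtain ⟨x, hx⟩ := List.exists_mem_of_ne_nil c hc.1
  cases x with
  | orig u => exact ⟨u, hx⟩
  | dash u =>
    obtain ⟨y, hyc, hy⟩ := hc.succ_mem hx
    cases y with
    | orig w => exact ⟨w, hyc⟩
    | D w => exact absurd hyc (hD w)
    | _ => exact hy.elim
  | D w => exact absurd hx (hD w)
  | D' w => exact absurd hx (hD' w)

end SplitNetwork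

/-- If every directed cycle of `G` meets `V_τ`, then the network `G_NC` is acyclic. -/
theorem GNC_acyclic {V : Type*} (A : V → V → Prop) (Vτ : Set V)
    (hfvs : ∀ c : List V, IsDiCycle A c → ∃ x ∈ c, x ∈ Vτ) :
    ¬ ∃ c : List (NCVert V), IsDiCycle (NCAdj A Vτ) c := by
  rintro ⟨c, hc⟩
  obtain ⟨u, hu⟩ := hc.exists_orig_mem
  have hloop := (transGen_ncAdj_orig (hc.transGen_self hu)).1 u rfl
  obtain ⟨d, hd⟩ := exists_isDiCycle_of_transGen hloop
  obtain ⟨x, hx, hxτ⟩ := hfvs d (hd.mono fun _ _ h => h.1)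
  obtain ⟨y, -, hyx⟩ := TransGen.tail'_iff.mp (hd.transGen_self hx)
  exact hyx.2 hxτ
end

section
/- With G and G_NC as in the standard construction (vertex-splitting of a directed graph G with feedback vertex set V_τ), for every v ∈ V_τ, directed paths in G_NC from v to D_{v'} correspond bijectively to directed cycles in G passing through v and through no other vertex of V_τ. -/
/-- A directed path from `s` to `t`: a nonempty list of distinct vertices starting at
`s`, ending at `t`, with consecutive vertices adjacent. -/
def IsDiPathFromTo {V : Type*} (A : V → V → Prop) (l : List V) (s t : V) : Prop :=
  l ≠ [] ∧ l.Nodup ∧ l.Chain' A ∧ l.head? = some s ∧ l.getLast? = some t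

/-- Extract the original (undashed) vertices visited by a trail of `G_NC`. -/
def origVerts {V : Type*} (l : List (NCVert V)) : List V :=
  l.filterMap (fun x => match x with | .orig u => some u | _ => none)

/-! In `G_NC` the only branching happens at dashed vertices: `u` is followed by `u'`, `D_w` by
`D_{w'}`, and `D_{w'}` is a sink. So a path from `v` to `D_{v'}` is forced to be
`v, v', u₁, u₁', …, uₖ, uₖ', D_v, D_{v'}` and is determined by its undashed vertices
`v, u₁, …, uₖ`. Its edges `(u', w)` are the edges of `G` into `w ∉ V_τ`, and its edge
`(uₖ', D_v)` is the edge `(uₖ, v)` of `G`, so these vertices form a cycle of `G` through `v`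
avoiding the rest of `V_τ`; conversely every such cycle lifts to such a path. -/

theorem List.isChain_cons_and_right_iff {α : Type*} {R : α → α → Prop} {P : α → Prop}
    {a : α} {l : List α} :
    (a :: l).IsChain (fun x y => R x y ∧ P y) ↔ (a :: l).IsChain R ∧ ∀ x ∈ l, P x := by
  induction l generalizing a with
  | nil => simp
  | cons b l ih => simp only [List.isChain_cons_cons, ih, List.forall_mem_cons]; tauto

namespace NCVert

variable {V : Type*} {A : V → V → Prop} {Vτ : Set V} {t u : V}

def liftPath (t : V) : List V → List (NCVert V)
  | [] => [.D t, .D' t]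
  | u :: c => .orig u :: .dash u :: liftPath t c

theorem origVerts_liftPath (t : V) (c : List V) : origVerts (liftPath t c) = c := by
  induction c with
  | nil => rfl
  | cons u c ih => simpa [liftPath, origVerts] using ih

theorem nodup_liftPath_iff {c : List V} : (liftPath t c).Nodup ↔ c.Nodup := by
  have orig_mem (u : V) (c : List V) : orig u ∈ liftPath t c ↔ u ∈ c := by
    induction c <;> simp_all [liftPath]
  have dash_mem (u : V) (c : List V) : dash u ∈ liftPath t c ↔ u ∈ c := by
    induction c <;> simp_all [liftPath]
  induction c with
  | nil => simp [liftPath]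
  | cons u c ih => simp [liftPath, orig_mem, dash_mem, ih]

theorem getLast?_liftPath (t : V) (c : List V) : (liftPath t c).getLast? = some (D' t) := by
  induction c with
  | nil => rfl
  | cons u c ih => cases c <;> simp_all [liftPath]

theorem isChain_liftPath_cons_iff {c : List V} :
    (liftPath t (u :: c)).IsChain (NCAdj A Vτ) ↔
      (u :: c).IsChain (fun a b => A a b ∧ b ∉ Vτ) ∧
        A ((u :: c).getLast (List.cons_ne_nil u c)) t ∧ t ∈ Vτ := by
  induction c generalizing u with
  | nil => simp [liftPath, NCAdj]
  | cons w c ih =>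
    rw [show liftPath t (u :: w :: c) = orig u :: dash u :: liftPath t (w :: c) from rfl,
      List.isChain_cons_cons, List.isChain_cons (x := dash u), ih, List.isChain_cons_cons]
    simp [liftPath, NCAdj, List.getLast_cons, and_assoc]

set_option linter.deprecated false in
theorem isDiPathFromTo_liftPath_iff (ht : t ∈ Vτ) {c : List V} :
    IsDiPathFromTo (NCAdj A Vτ) (liftPath t c) (orig t) (D' t) ↔
      IsDiCycle A c ∧ c.head? = some t ∧ ∀ x ∈ c, x ∈ Vτ → x = t := by
  cases c with
  | nil => simp [IsDiPathFromTo, IsDiCycle, liftPath]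
  | cons u c =>
    have hne : liftPath t (u :: c) ≠ [] := List.cons_ne_nil _ _
    have hhead : (liftPath t (u :: c)).head? = some (orig u) := rfl
    simp only [IsDiPathFromTo, IsDiCycle, List.Chain', nodup_liftPath_iff, hne, hhead,
      isChain_liftPath_cons_iff, List.isChain_cons_and_right_iff, getLast?_liftPath,
      List.getLast?_eq_getLast (List.cons_ne_nil u c), List.nodup_cons, List.head?_cons,
      Option.some.injEq, orig.injEq, Option.mem_def, forall_eq', List.mem_cons, forall_eq_or_imp,
      ne_eq, reduceCtorEq, not_false_eq_true, and_true, true_and]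
    constructor
    · rintro ⟨hnd, ⟨⟨hA, hout⟩, hlast, -⟩, rfl⟩
      exact ⟨⟨hnd, hA, hlast⟩, rfl, fun _ => rfl, fun x hx hxV => absurd hxV (hout x hx)⟩
    · rintro ⟨⟨hnd, hA, hlast⟩, rfl, -, honly⟩
      exact ⟨hnd, ⟨⟨hA, fun x hx hxV => hnd.1 (honly x hx hxV ▸ hx)⟩, hlast, ht⟩, rfl⟩

theorem eq_liftPath_origVerts :
    ∀ {l : List (NCVert V)} {s : V}, l.IsChain (NCAdj A Vτ) → l.head? = some (orig s) →
      l.getLast? = some (D' t) → l = liftPath t (origVerts l)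
  | [], _, _, hh, _ | dash _ :: _, _, _, hh, _ | D _ :: _, _, _, hh, _
  | D' _ :: _, _, _, hh, _ => by simp at hh
  | [orig _], _, _, _, hl => by simp at hl
  | [orig _, y], _, hc, _, hl => by cases y <;> simp_all [NCAdj]
  | orig u :: y :: z :: l, _, hc, _, hl => by
    obtain ⟨rfl, hyz, hc⟩ : y = dash u ∧ NCAdj A Vτ y z ∧ (z :: l).IsChain (NCAdj A Vτ) := by
      cases y <;> simp_all [NCAdj, eq_comm]
    cases z with
    | orig w =>
      have ih := eq_liftPath_origVerts hc rfl (by simpa using hl)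
      exact congrArg (fun m => orig u :: dash u :: m) ih
    | D w =>
      obtain ⟨rfl, rfl⟩ : w = t ∧ l = [D' t] := by
        match l, hc with
        | [], _ => simp at hl
        | [a], hc => cases a <;> simp_all [NCAdj]
        | a :: b :: l, hc => cases a <;> cases b <;> simp_all [NCAdj]
      rfl
    | dash w | D' w => simp [NCAdj] at hyz
termination_by l => l.length

end NCVert

open NCVert in
theorem unipaths_biject_with_unicycles_general {V : Type*} (A : V → V → Prop) (Vτ : Set V)
    (v : V) (hv : v ∈ Vτ) :
    Set.BijOn origVerts
      {l : List (NCVert V) | IsDiPathFromTo (NCAdj A Vτ) l (.orig v) (.D' v)}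
      {c : List V | IsDiCycle A c ∧ c.head? = some v ∧ ∀ x ∈ c, x ∈ Vτ → x = v} := by
  have eq_liftPath {l} (hl : IsDiPathFromTo (NCAdj A Vτ) l (.orig v) (.D' v)) :
      l = liftPath v (origVerts l) := by
    obtain ⟨-, -, hchain, hhead, hlast⟩ := hl
    exact eq_liftPath_origVerts hchain hhead hlast
  refine Set.InvOn.bijOn (f' := liftPath v) ⟨fun l hl => (eq_liftPath hl).symm,
    fun c _ => origVerts_liftPath v c⟩ (fun l hl => ?_) fun c hc => ?_
  · rw [eq_liftPath hl] at hl
    exact (isDiPathFromTo_liftPath_iff hv).1 hl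
  · exact (isDiPathFromTo_liftPath_iff hv).2 hc

/-- For `v ∈ V_τ`, extracting the undashed vertices gives a bijective correspondence
between directed paths in `G_NC` from `v` to `D_{v'}` and directed cycles of `G`
(represented as lists starting at `v`) passing through `v` and through no other
vertex of `V_τ`. -/
theorem unipaths_biject_with_unicycles {V : Type*} (A : V → V → Prop) (Vτ : Set V)
    (hfvs : ∀ c : List V, IsDiCycle A c → ∃ x ∈ c, x ∈ Vτ)
    (v : V) (hv : v ∈ Vτ) :
    Set.BijOn origVerts
      {l : List (NCVert V) | IsDiPathFromTo (NCAdj A Vτ) l (.orig v) (.D' v)}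
      {c : List V | IsDiCycle A c ∧ c.head? = some v ∧ ∀ x ∈ c, x ∈ Vτ → x = v} :=
  unipaths_biject_with_unicycles_general A Vτ v hv
end

section
/- With G and G_NC as in the standard vertex-splitting construction, if two paths p: v → D_{v'} and q: w → D_{w'} in G_NC (for distinct v, w ∈ V_τ) are edge-disjoint, then the corresponding directed cycles in G through v and through w respectively are vertex-disjoint. -/
/-- The list of (directed) edges traversed by a list of vertices. -/
def edgesOf {V : Type*} (l : List V) : List (V × V) := l.zip l.tail

lemma exists_next {V : Type*} {A : V → V → Prop} : ∀ {l : List V}, l.Chain' A → ∀ a ∈ l,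
    a ∈ l.getLast? ∨ ∃ b, (a, b) ∈ edgesOf l ∧ A a b := by
  intro l
  induction l with
  | nil => simp
  | cons c t ih =>
    intro hc a ha
    cases t with
    | nil =>
      simp only [List.mem_singleton] at ha
      left; simp [ha]
    | cons d t' =>
      rcases List.mem_cons.mp ha with rfl | ha
      · right
        exact ⟨d, by simp [edgesOf], (List.isChain_cons_cons.mp hc).1⟩
      · rcases ih (List.isChain_cons_cons.mp hc).2 a ha with h | ⟨b, hb, hab⟩
        · left; rwa [List.getLast?_cons_cons]
        · right
          refine ⟨b, ?_, hab⟩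
          have : edgesOf (c :: d :: t') = (c, d) :: edgesOf (d :: t') := rfl
          rw [this]; exact List.mem_cons_of_mem _ hb

lemma orig_edge_mem {V : Type*} {A : V → V → Prop} {Vτ : Set V} {l : List (NCVert V)}
    {s : V} (hc : l.Chain' (NCAdj A Vτ)) (hlast : l.getLast? = some (.D' s))
    {x : V} (hx : x ∈ origVerts l) :
    ((NCVert.orig x, NCVert.dash x) : NCVert V × NCVert V) ∈ edgesOf l := by
  simp only [origVerts, List.mem_filterMap] at hx
  obtain ⟨a, ha, hfa⟩ := hx
  obtain rfl : a = NCVert.orig x := by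
    cases a <;> simp_all
  rcases exists_next hc _ ha with h | ⟨b, hb, hab⟩
  · rw [hlast] at h; simp at h
  · cases b with
    | dash u =>
      obtain rfl : x = u := hab
      exact hb
    | orig u => exact absurd hab id
    | D u => exact absurd hab id
    | D' u => exact absurd hab id

/-- If paths `p : v → D_{v'}` and `q : w → D_{w'}` in `G_NC` (for distinct
`v, w ∈ V_τ`) are edge-disjoint, then the corresponding directed cycles of `G`
(through `v`, resp. `w`) are vertex-disjoint. -/
theorem edge_disjoint_unipaths_give_disjoint_cycles {V : Type*}
    (A : V → V → Prop) (Vτ : Set V)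
    (v w : V) (hv : v ∈ Vτ) (hw : w ∈ Vτ) (hvw : v ≠ w)
    (p q : List (NCVert V))
    (hp : IsDiPathFromTo (NCAdj A Vτ) p (.orig v) (.D' v))
    (hq : IsDiPathFromTo (NCAdj A Vτ) q (.orig w) (.D' w))
    (hdisj : ∀ e ∈ edgesOf p, e ∉ edgesOf q) :
    ∀ x ∈ origVerts p, x ∉ origVerts q := by
  intro x hxp hxq
  exact hdisj _ (orig_edge_mem hp.2.2.1 hp.2.2.2.2 hxp)
    (orig_edge_mem hq.2.2.1 hq.2.2.2.2 hxq)
end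

section
/- Let B be a k × n matrix over a field F of rank k, and let C be an (n−k) × n matrix over F of rank n−k whose vector matroid is the dual of the vector matroid of B. Let r* denote the rank function of the vector matroid of C. For an index coding side-information structure assigning to each column index v a subset S(v) ⊆ [n] \ {v}, the matrix B is a valid (scalar linear) index coding matrix — i.e., for every v, the column space restricted to [n] \ S(v) satisfies rank([n] \ S(v)) = 1 + rank([n] \ (S(v) ∪ {v})) in the matroid of B — if and only if r*(S(v) ∪ {v}) = r*(S(v)) for every v ∈ [n]. -/
/-!
For `X ⊆ E` the dual rank satisfies
`r*(X) + r(E) = r(E \ X) + |X|`. Applying this to `X = S(v)` and to `X = S(v) ∪ {v}`, whose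
cardinality is one larger since `v ∉ S(v)`, and subtracting shows that both conditions say
`r*(S(v) ∪ {v}) - r*(S(v)) = 1 + r(E \ (S(v) ∪ {v})) - r(E \ S(v))` vanishes.
-/

/-- The rank of a set `X` in a matroid `M`: the maximum cardinality of an
independent subset of `X`. -/
noncomputable def Matroid.mrank {α : Type*} (M : Matroid α) (X : Set α) : ℕ :=
  sSup {n | ∃ I, M.Indep I ∧ I ⊆ X ∧ I.ncard = n}

namespace Matroid

variable {α : Type*} [Finite α] (M : Matroid α)

lemma cast_mrank_eq_eRk (X : Set α) : (M.mrank X : ℕ∞) = M.eRk X := by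
  obtain ⟨I, hI⟩ := M.exists_isBasis' X
  have hmax : IsGreatest {n | ∃ J, M.Indep J ∧ J ⊆ X ∧ J.ncard = n} I.ncard := by
    refine ⟨⟨I, hI.indep, hI.subset, rfl⟩, ?_⟩
    rintro _ ⟨J, hJ, hJX, rfl⟩
    have hle := hJ.encard_le_eRk_of_subset hJX
    rwa [hI.eRk_eq_encard, ← J.toFinite.cast_ncard_eq, ← I.toFinite.cast_ncard_eq,
      Nat.cast_le] at hle
  rw [mrank, hmax.csSup_eq, hI.eRk_eq_encard, I.toFinite.cast_ncard_eq]

lemma mrank_dual_add_mrank_ground {X : Set α} (hX : X ⊆ M.E) :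
    M✶.mrank X + M.mrank M.E = M.mrank (M.E \ X) + X.ncard := by
  apply Nat.cast_injective (R := ℕ∞)
  push_cast
  simp only [cast_mrank_eq_eRk, X.toFinite.cast_ncard_eq, eRk_ground]
  exact M.eRk_dual_add_eRank X hX

end Matroid

theorem index_code_valid_iff_dual_rank_condition_general
    {n : ℕ}
    (M : Matroid (Fin n)) (hE : M.E = Set.univ)
    (S : Fin n → Set (Fin n)) (hS : ∀ v, v ∉ S v) :
    (∀ v : Fin n,
        M.mrank (Set.univ \ S v) = 1 + M.mrank (Set.univ \ (S v ∪ {v}))) ↔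
      (∀ v : Fin n, M✶.mrank (S v ∪ {v}) = M✶.mrank (S v)) := by
  refine forall_congr' fun v ↦ ?_
  have hS_dual := M.mrank_dual_add_mrank_ground (X := S v) (by simp [hE])
  have hinsert_dual := M.mrank_dual_add_mrank_ground (X := S v ∪ {v}) (by simp [hE])
  rw [Set.union_singleton, Set.ncard_insert_of_notMem (hS v)] at hinsert_dual
  rw [hE, Set.union_singleton] at *
  omega

/-- Let `B` be a `k × n` matrix over `F` of rank `k`, with vector matroid `M`, and
let `C` be an `(n-k) × n` matrix of rank `n - k` whose vector matroid is `M✶`. For a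
side-information structure `S` (with `v ∉ S v`), `B` is a valid index coding matrix,
i.e. `r([n] \ S(v)) = 1 + r([n] \ (S(v) ∪ {v}))` for all `v` in the matroid of `B`,
iff `r*(S(v) ∪ {v}) = r*(S(v))` for all `v`, where `r*` is the rank function of the
matroid of `C`. -/
theorem index_code_valid_iff_dual_rank_condition
    {F : Type*} [Field F] {k n : ℕ} (hkn : k ≤ n)
    (B : Matrix (Fin k) (Fin n) F) (hB : B.rank = k)
    (C : Matrix (Fin (n - k)) (Fin n) F) (hC : C.rank = n - k)
    (M : Matroid (Fin n)) (hE : M.E = Set.univ)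
    (hIB : ∀ s : Set (Fin n),
      M.Indep s ↔ LinearIndependent F (fun i : s => B.transpose i.1))
    (hIC : ∀ s : Set (Fin n),
      M✶.Indep s ↔ LinearIndependent F (fun i : s => C.transpose i.1))
    (S : Fin n → Set (Fin n)) (hS : ∀ v, v ∉ S v) :
    (∀ v : Fin n,
        M.mrank (Set.univ \ S v) = 1 + M.mrank (Set.univ \ (S v ∪ {v}))) ↔
      (∀ v : Fin n, M✶.mrank (S v ∪ {v}) = M✶.mrank (S v)) :=
  index_code_valid_iff_dual_rank_condition_general M hE S hS
end

section
/- Let G be a directed graph with feedback vertex set {1,2,3} of minimum size (τ = 3), and suppose a nonempty set V_I of vertices lies on every directed cycle of G that meets {1,2,3} in exactly one vertex ('unicycle'). Then there exists, for some distinct pair i, j ∈ {1,2,3}, a directed cycle through exactly {i, j} among {1,2,3} ('ij-bicycle') that avoids at least one vertex of V_I; indeed, if every ij-bicycle for every pair passed through all of V_I, then removing any single vertex of V_I together with at most one more vertex would destroy all cycles, giving τ ≤ 2, a contradiction. -/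
/-- If `{v₁, v₂, v₃}` is a minimum feedback vertex set of size `3` (`τ = 3`) and the
nonempty vertex set `V_I` lies on every unicycle (cycle meeting `{v₁, v₂, v₃}` in
exactly one vertex), then for some distinct pair `i, j ∈ {v₁, v₂, v₃}` there is a
directed cycle through exactly `{i, j}` among `{v₁, v₂, v₃}` (an `ij`-bicycle) that
avoids at least one vertex of `V_I`. -/
theorem bicycle_avoiding_VI_exists {V : Type*} [Fintype V] [DecidableEq V]
    (A : V → V → Prop) (v₁ v₂ v₃ : V)
    (hdist : v₁ ≠ v₂ ∧ v₁ ≠ v₃ ∧ v₂ ≠ v₃)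
    (hfvs : IsFVS A {v₁, v₂, v₃})
    (hmin : ∀ S : Finset V, IsFVS A S → 3 ≤ S.card)
    (VI : Set V) (hVI : VI.Nonempty)
    (hVIuni : ∀ c : List V, IsDiCycle A c →
      (∃ i ∈ ({v₁, v₂, v₃} : Finset V), i ∈ c ∧
        ∀ x ∈ ({v₁, v₂, v₃} : Finset V), x ∈ c → x = i) →
      ∀ y ∈ VI, y ∈ c) :
    ∃ i ∈ ({v₁, v₂, v₃} : Finset V), ∃ j ∈ ({v₁, v₂, v₃} : Finset V), i ≠ j ∧
      ∃ c : List V, IsDiCycle A c ∧ i ∈ c ∧ j ∈ c ∧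
        (∀ x ∈ ({v₁, v₂, v₃} : Finset V), x ∈ c → x = i ∨ x = j) ∧
        ∃ y ∈ VI, y ∉ c := by
  obtain ⟨y, hy⟩ := hVI
  by_contra hcon
  push_neg at hcon
  have hfvs2 : IsFVS A {y, v₁} := by
    intro c hc
    by_cases h1 : v₁ ∈ c
    · exact ⟨v₁, h1, by simp⟩
    · by_cases h2 : v₂ ∈ c
      · by_cases h3 : v₃ ∈ c
        · refine ⟨y, ?_, by simp⟩
          refine hcon v₂ (by simp) v₃ (by simp) hdist.2.2 c hc h2 h3 ?_ y hy
          intro x hx hxc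
          simp only [Finset.mem_insert, Finset.mem_singleton] at hx
          rcases hx with rfl | rfl | rfl
          · exact absurd hxc h1
          · exact Or.inl rfl
          · exact Or.inr rfl
        · refine ⟨y, ?_, by simp⟩
          refine hVIuni c hc ⟨v₂, by simp, h2, ?_⟩ y hy
          intro x hx hxc
          simp only [Finset.mem_insert, Finset.mem_singleton] at hx
          rcases hx with rfl | rfl | rfl
          · exact absurd hxc h1
          · rfl
          · exact absurd hxc h3
      · by_cases h3 : v₃ ∈ c
        · refine ⟨y, ?_, by simp⟩
          refine hVIuni c hc ⟨v₃, by simp, h3, ?_⟩ y hy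
          intro x hx hxc
          simp only [Finset.mem_insert, Finset.mem_singleton] at hx
          rcases hx with rfl | rfl | rfl
          · exact absurd hxc h1
          · exact absurd hxc h2
          · rfl
        · obtain ⟨x, hxc, hxS⟩ := hfvs c hc
          simp only [Finset.mem_insert, Finset.mem_singleton] at hxS
          rcases hxS with rfl | rfl | rfl
          · exact absurd hxc h1
          · exact absurd hxc h2
          · exact absurd hxc h3
  have h3le := hmin _ hfvs2
  have hle : ({y, v₁} : Finset V).card ≤ 2 := by
    refine le_trans (Finset.card_insert_le _ _) ?_
    simp
  omega
end

section
/- Let B be an l × n matrix over a field F that is a valid scalar linear index code for side-information graph G. If V' ⊆ [n] induces an acyclic subgraph of G, then the columns of B indexed by V' are linearly independent over F. -/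
/-- `B` is a valid scalar linear index code for the side-information graph with
adjacency `Adj` (edge `(j,i)` means receiver `i` knows `x_j`): for each `i`, the
column `b_i` is not in the span of the columns `b_j` with `j ∉ S(i) ∪ {i}`. -/
def ValidIndexCode {F : Type*} [Field F] {l n : ℕ}
    (B : Matrix (Fin l) (Fin n) F) (Adj : Fin n → Fin n → Prop) : Prop :=
  ∀ i : Fin n, B.transpose i ∉
    Submodule.span F (B.transpose '' {j | ¬ Adj j i ∧ j ≠ i})

/-!
If a nontrivial combination of the columns indexed by `V'` vanished, its support `T` would
contain a vertex `i` with no in-neighbour in `T`: otherwise, repeatedly stepping to an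
in-neighbour inside the finite set `T` would eventually close a directed cycle inside `V'`.
The vanishing combination puts `b_i` in the span of the other columns of `T`, none of which
receiver `i` knows, contradicting validity at `i`.
-/

section DiCycle

variable {V : Type*} {A : V → V → Prop}

theorem IsDiCycle.reverse {c : List V} (hc : IsDiCycle (flip A) c) : IsDiCycle A c.reverse := by
  obtain ⟨hne, hnodup, hchain, hclose⟩ := hc
  refine ⟨List.reverse_ne_nil_iff.mpr hne, List.nodup_reverse.mpr hnodup,
    List.isChain_reverse.mpr hchain, ?_⟩
  rw [List.getLast?_reverse, List.head?_reverse]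
  exact fun x hx y hy => hclose y hy x hx

theorem isDiCycle_of_cycle_chain {c : List V} (hne : c ≠ []) (hnodup : c.Nodup)
    (hchain : (c : Cycle V).Chain A) : IsDiCycle A c := by
  rw [Cycle.chain_ne_nil _ hne, List.isChain_cons] at hchain
  refine ⟨hne, hnodup, hchain.2, fun x hx y hy => ?_⟩
  rw [List.getLast?_eq_some_getLast hne, Option.mem_some_iff] at hx
  exact hx ▸ hchain.1 y hy

theorem Function.isDiCycle_periodicOrbit {g : V → V} {x : V} (hx : x ∈ periodicPts g)
    (hA : ∀ n, A (g^[n] x) (g^[n + 1] x)) :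
    IsDiCycle A ((List.range (minimalPeriod g x)).map (g^[·] x)) := by
  refine isDiCycle_of_cycle_chain ?_ nodup_periodicOrbit ((periodicOrbit_chain' A hx).mpr hA)
  simpa using (minimalPeriod_pos_of_mem_periodicPts hx).ne'

theorem Function.exists_iterate_mem_periodicPts [Finite V] (g : V → V) (x : V) :
    ∃ m, g^[m] x ∈ periodicPts g := by
  obtain ⟨a, b, hne, heq⟩ := Finite.exists_ne_map_eq_of_infinite (g^[·] x)
  wlog hab : a < b generalizing a b
  · exact this b a hne.symm heq.symm (by omega)
  refine ⟨a, mk_mem_periodicPts (n := b - a) (by omega) ?_⟩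
  rw [IsPeriodicPt, IsFixedPt, ← iterate_add_apply, Nat.sub_add_cancel hab.le]
  exact heq.symm

theorem exists_isDiCycle_of_forall_exists_rel [Finite V] {T : Set V} (hT : T.Nonempty)
    (h : ∀ i ∈ T, ∃ j ∈ T, A j i) : ∃ c, IsDiCycle A c ∧ ∀ x ∈ c, x ∈ T := by
  obtain ⟨x₀, hx₀⟩ := hT
  have : Nonempty V := ⟨x₀⟩
  -- `g` picks in-neighbours, so a periodic orbit of `g` runs backwards along a cycle of `A`.
  choose! g hgT hgA using h
  obtain ⟨m, hm⟩ := Function.exists_iterate_mem_periodicPts g x₀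
  have hiter : ∀ n, g^[n] (g^[m] x₀) ∈ T := fun n =>
    Set.MapsTo.iterate hgT n (Set.MapsTo.iterate hgT m hx₀)
  refine ⟨_, (Function.isDiCycle_periodicOrbit (A := flip A) hm fun n => ?_).reverse, ?_⟩
  · rw [Function.iterate_succ_apply']
    exact hgA _ (hiter n)
  · simp only [List.mem_reverse, List.mem_map]
    rintro _ ⟨n, -, rfl⟩
    exact hiter n

end DiCycle

theorem Finsupp.mem_span_image_support_diff_of_linearCombination_eq_zero
    {ι K M : Type*} [DivisionRing K] [AddCommGroup M] [Module K M] {v : ι → M} {f : ι →₀ K}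
    (hf : linearCombination K v f = 0) {i : ι} (hi : i ∈ f.support) :
    v i ∈ Submodule.span K (v '' (↑f.support \ {i})) := by
  classical
  have hrel : f i • v i = -linearCombination K v (f.erase i) := by
    rw [← erase_add_single i f, map_add, linearCombination_single] at hf
    exact eq_neg_of_add_eq_zero_right hf
  have hspan : linearCombination K v (f.erase i) ∈ Submodule.span K (v '' (↑f.support \ {i})) :=
    (mem_span_image_iff_linearCombination K).mpr
      ⟨_, by rw [mem_supported, support_erase, Finset.coe_erase], rfl⟩
  rw [← inv_smul_smul₀ (mem_support_iff.mp hi) (v i), hrel]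
  exact Submodule.smul_mem _ _ (Submodule.neg_mem _ hspan)

/-- If `B` is a valid scalar linear index code for side-information graph `G` and the
vertex set `V'` induces an acyclic subgraph of `G`, then the columns of `B` indexed
by `V'` are linearly independent. -/
theorem columns_indep_on_acyclic_set {F : Type*} [Field F] {l n : ℕ}
    (B : Matrix (Fin l) (Fin n) F) (Adj : Fin n → Fin n → Prop)
    (hB : ValidIndexCode B Adj) (V' : Finset (Fin n))
    (hacyc : ∀ c : List (Fin n), IsDiCycle Adj c → ∃ x ∈ c, x ∉ V') :
    LinearIndependent F (fun i : V' => B.transpose i.1) := by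
  refine linearIndepOn_iff.mpr fun f hfV hf => ?_
  by_contra hne
  obtain ⟨i, hi, hsource⟩ : ∃ i ∈ f.support, ∀ j ∈ f.support, ¬ Adj j i := by
    by_contra! h
    obtain ⟨c, hc, hcf⟩ :=
      exists_isDiCycle_of_forall_exists_rel (T := (f.support : Set (Fin n)))
        (Finset.coe_nonempty.mpr (Finsupp.support_nonempty_iff.mpr hne)) h
    obtain ⟨x, hx, hxV⟩ := hacyc c hc
    exact hxV (hfV (hcf x hx))
  refine hB i (Submodule.span_mono (Set.image_mono ?_)
    (Finsupp.mem_span_image_support_diff_of_linearCombination_eq_zero hf hi))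
  exact fun j ⟨hj, hji⟩ => ⟨hsource j hj, hji⟩
end
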